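/- Let k be a field of characteristic p > 0 and R_s = k[x_1,...,x_n]/⟨x_1^p,...,x_n^p⟩^{p^{s-1}}. If σ is a k-algebra automorphism of R_s, then the determinant of the Jacobian matrix J(σ) = (∂_j σ(x̄_i)) is an invertible element of R_s. -/

import Mathlib

/-!
`R_s` is a local `k`-algebra: evaluation at the origin is its residue map and every `x̄ᵢ` is
nilpotent, so an element is a unit as soon as its constant term is. The constant term of the
Jacobian determinant is the determinant of the linear part of `σ`. Since `I ⊆ (x₁, …, xₙ)²`,
the linear part does not depend on the chosen lifts, and the chain rule at the origin applied to
`σ⁻¹ ∘ σ = id` shows that the linear parts of `σ` and `σ⁻¹` are inverse matrices.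
-/

open MvPolynomial

namespace MvPolynomial

variable {R ι : Type*} [CommRing R]

theorem mem_idealOfVars_iff {f : MvPolynomial ι R} :
    f ∈ idealOfVars ι R ↔ constantCoeff f = 0 := by
  rw [← pow_one (idealOfVars ι R), mem_pow_idealOfVars_iff']
  simp [constantCoeff_eq, Finsupp.degree_eq_zero_iff]

theorem constantCoeff_pderiv_eq_zero_of_mem_sq {f : MvPolynomial ι R}
    (hf : f ∈ idealOfVars ι R ^ 2) (j : ι) : constantCoeff (pderiv j f) = 0 := by
  rw [pow_two] at hf
  refine Submodule.mul_induction_on hf (fun a ha b hb => ?_) (fun f g hf hg => ?_)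
  · rw [mem_idealOfVars_iff] at ha hb
    simp [ha, hb]
  · simp [hf, hg]

theorem constantCoeff_aeval_of_constantCoeff_eq_zero {Q : ι → MvPolynomial ι R}
    (hQ : ∀ l, constantCoeff (Q l) = 0) (f : MvPolynomial ι R) :
    constantCoeff (aeval Q f) = constantCoeff f := by
  suffices constantCoeff.comp (aeval Q).toRingHom = constantCoeff from
    congr($this f)
  ext <;> simp [hQ]

theorem pderiv_aeval [Fintype ι] (Q : ι → MvPolynomial ι R) (f : MvPolynomial ι R) (j : ι) :
    pderiv j (aeval Q f) = ∑ l, aeval Q (pderiv l f) * pderiv j (Q l) := by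
  classical
  induction f using MvPolynomial.induction_on with
  | C a => simp
  | add f g hf hg => simp only [map_add, hf, hg, add_mul, Finset.sum_add_distrib]
  | mul_X f i hf =>
    simp only [map_mul, aeval_X, Derivation.leibniz, smul_eq_mul, pderiv_X, map_add, hf,
      add_mul, Finset.sum_add_distrib, Finset.mul_sum, Pi.single_apply, mul_ite, mul_one,
      mul_zero, apply_ite (aeval Q), map_zero, ite_mul, zero_mul, Finset.sum_ite_eq,
      Finset.mem_univ, if_true, mul_assoc]

noncomputable def jacobianMatrix (P : ι → MvPolynomial ι R) : Matrix ι ι (MvPolynomial ι R) :=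
  Matrix.of fun i j => pderiv j (P i)

theorem map_constantCoeff_jacobianMatrix_aeval [Fintype ι] {Q : ι → MvPolynomial ι R}
    (hQ : ∀ l, constantCoeff (Q l) = 0) (P : ι → MvPolynomial ι R) :
    (jacobianMatrix fun i => aeval Q (P i)).map constantCoeff =
      (jacobianMatrix P).map constantCoeff * (jacobianMatrix Q).map constantCoeff := by
  ext i j
  simp only [jacobianMatrix, Matrix.map_apply, Matrix.of_apply, Matrix.mul_apply, pderiv_aeval,
    map_sum, map_mul, constantCoeff_aeval_of_constantCoeff_eq_zero hQ]

theorem map_constantCoeff_jacobianMatrix_eq_one [DecidableEq ι] {P : ι → MvPolynomial ι R}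
    (hP : ∀ i, P i - X i ∈ idealOfVars ι R ^ 2) : (jacobianMatrix P).map constantCoeff = 1 := by
  ext i j
  have h := constantCoeff_pderiv_eq_zero_of_mem_sq (hP i) j
  rw [map_sub, map_sub, sub_eq_zero] at h
  simp [jacobianMatrix, h, pderiv_X, Matrix.one_apply, Pi.single_apply]

section Quotient

variable {I : Ideal (MvPolynomial ι R)}

theorem isNilpotent_mk_of_constantCoeff_eq_zero
    (hX : ∀ i, IsNilpotent (Ideal.Quotient.mk I (X i))) {f : MvPolynomial ι R}
    (hf : constantCoeff f = 0) : IsNilpotent (Ideal.Quotient.mk I f) := by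
  have h : idealOfVars ι R ≤ (nilradical _).comap (Ideal.Quotient.mk I) := by
    rw [Ideal.span_le]
    rintro _ ⟨i, rfl⟩
    exact hX i
  exact h (mem_idealOfVars_iff.2 hf)

theorem isUnit_mk_of_isUnit_constantCoeff
    (hX : ∀ i, IsNilpotent (Ideal.Quotient.mk I (X i))) {f : MvPolynomial ι R}
    (hf : IsUnit (constantCoeff f)) : IsUnit (Ideal.Quotient.mk I f) := by
  have hnil : IsNilpotent (Ideal.Quotient.mk I (f - C (constantCoeff f))) :=
    isNilpotent_mk_of_constantCoeff_eq_zero hX (by simp)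
  have hunit : IsUnit (Ideal.Quotient.mk I (C (constantCoeff f))) := (hf.map C).map _
  simpa using hnil.isUnit_add_right_of_commute hunit (.all _ _)

theorem constantCoeff_eq_zero_of_isNilpotent_mk [IsReduced R] (hI : I ≤ idealOfVars ι R)
    {f : MvPolynomial ι R} (hf : IsNilpotent (Ideal.Quotient.mk I f)) : constantCoeff f = 0 := by
  obtain ⟨N, hN⟩ := hf
  have h : f ^ N ∈ idealOfVars ι R := hI (Ideal.Quotient.eq_zero_iff_mem.1 (by rw [map_pow, hN]))
  rw [mem_idealOfVars_iff, map_pow] at h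
  exact IsReduced.eq_zero _ ⟨N, h⟩

theorem mk_aeval_eq_of_mk_eq {κ : Type*} {J : Ideal (MvPolynomial κ R)}
    {φ : (MvPolynomial ι R ⧸ I) →ₐ[R] (MvPolynomial κ R ⧸ J)} {Q : ι → MvPolynomial κ R}
    (hQ : ∀ j, Ideal.Quotient.mk J (Q j) = φ (Ideal.Quotient.mk I (X j)))
    (f : MvPolynomial ι R) :
    Ideal.Quotient.mk J (aeval Q f) = φ (Ideal.Quotient.mk I f) := by
  have h : (Ideal.Quotient.mkₐ R J).comp (aeval Q) = φ.comp (Ideal.Quotient.mkₐ R I) := by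
    ext j
    simpa using hQ j
  exact congr($h f)

theorem isUnit_det_map_mk_jacobianMatrix [Fintype ι] [DecidableEq ι] [IsReduced R]
    (hX : ∀ i, IsNilpotent (Ideal.Quotient.mk I (X i))) (hI : I ≤ idealOfVars ι R ^ 2)
    (σ : (MvPolynomial ι R ⧸ I) ≃ₐ[R] (MvPolynomial ι R ⧸ I)) {P : ι → MvPolynomial ι R}
    (hP : ∀ i, Ideal.Quotient.mk I (P i) = σ (Ideal.Quotient.mk I (X i))) :
    IsUnit ((jacobianMatrix P).map (Ideal.Quotient.mk I)).det := by
  choose Q hQ using fun j => Ideal.Quotient.mk_surjective (σ.symm (Ideal.Quotient.mk I (X j)))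
  have hQ0 : ∀ l, constantCoeff (Q l) = 0 := fun l =>
    constantCoeff_eq_zero_of_isNilpotent_mk (hI.trans (Ideal.pow_le_self two_ne_zero))
      (by rw [hQ]; exact (hX l).map σ.symm)
  have hPQ : ∀ i, aeval Q (P i) - X i ∈ I := fun i => Ideal.Quotient.eq.1 <| by
    rw [mk_aeval_eq_of_mk_eq (φ := σ.symm.toAlgHom) hQ, AlgEquiv.toAlgHom_apply, hP,
      σ.symm_apply_apply]
  have hAB : (jacobianMatrix P).map constantCoeff * (jacobianMatrix Q).map constantCoeff = 1 := by
    rw [← map_constantCoeff_jacobianMatrix_aeval hQ0]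
    exact map_constantCoeff_jacobianMatrix_eq_one fun i => hI (hPQ i)
  rw [← RingHom.mapMatrix_apply, ← RingHom.map_det]
  refine isUnit_mk_of_isUnit_constantCoeff hX ?_
  rw [RingHom.map_det]
  exact Matrix.isUnit_det_of_right_inverse hAB

end Quotient

end MvPolynomial

theorem stmt_2_general (k : Type*) [Field k] (p : ℕ) [Fact p.Prime]
    (n s : ℕ) (I : Ideal (MvPolynomial (Fin n) k))
    (hI : I = (Ideal.span (Set.range fun i : Fin n =>
      (X i : MvPolynomial (Fin n) k) ^ p)) ^ (p ^ (s - 1)))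
    (σ : (MvPolynomial (Fin n) k ⧸ I) ≃ₐ[k] (MvPolynomial (Fin n) k ⧸ I)) :
    ∀ P : Fin n → MvPolynomial (Fin n) k,
      (∀ i, Ideal.Quotient.mk I (P i) = σ (Ideal.Quotient.mk I (X i))) →
      IsUnit (Matrix.det
        (Matrix.of fun i j : Fin n => Ideal.Quotient.mk I (pderiv j (P i)))) := by
  intro P hP
  have hp : p.Prime := Fact.out
  have hXp_mem_sq : ∀ i, (X i : MvPolynomial (Fin n) k) ^ p ∈ idealOfVars (Fin n) k ^ 2 :=
    fun i => Ideal.pow_le_pow_right hp.two_le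
      (Ideal.pow_mem_pow (Ideal.subset_span (Set.mem_range_self i)) p)
  have hI_le_sq : I ≤ idealOfVars (Fin n) k ^ 2 := by
    rw [hI]
    exact (Ideal.pow_le_self (pow_ne_zero _ hp.ne_zero)).trans
      (Ideal.span_le.2 (Set.range_subset_iff.2 hXp_mem_sq))
  have hX : ∀ i, IsNilpotent (Ideal.Quotient.mk I (X i)) := fun i =>
    ⟨p * p ^ (s - 1), by
      rw [← map_pow, Ideal.Quotient.eq_zero_iff_mem, hI, pow_mul]
      exact Ideal.pow_mem_pow (Ideal.subset_span (Set.mem_range_self i)) _⟩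
  exact isUnit_det_map_mk_jacobianMatrix hX hI_le_sq σ hP

/-- For `k` a field of characteristic `p > 0` and
`R_s = k[x₁,…,xₙ]/⟨x₁^p,…,xₙ^p⟩^{p^{s-1}}`, for every `k`-algebra automorphism `σ` of
`R_s`, the determinant of the Jacobian matrix `(∂_j σ(x̄_i))` (computed via any lifts to
the polynomial ring) is invertible in `R_s`. -/
theorem stmt_2 (k : Type*) [Field k] (p : ℕ) [Fact p.Prime] [CharP k p]
    (n s : ℕ) (hs : 1 ≤ s) (I : Ideal (MvPolynomial (Fin n) k))
    (hI : I = (Ideal.span (Set.range fun i : Fin n =>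
      (X i : MvPolynomial (Fin n) k) ^ p)) ^ (p ^ (s - 1)))
    (σ : (MvPolynomial (Fin n) k ⧸ I) ≃ₐ[k] (MvPolynomial (Fin n) k ⧸ I)) :
    ∀ P : Fin n → MvPolynomial (Fin n) k,
      (∀ i, Ideal.Quotient.mk I (P i) = σ (Ideal.Quotient.mk I (X i))) →
      IsUnit (Matrix.det
        (Matrix.of fun i j : Fin n => Ideal.Quotient.mk I (pderiv j (P i)))) :=
  stmt_2_general k p n s I hI σ
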